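/- For all n ∈ ℕ, the Frobenius (Hilbert–Schmidt) norm of the Toeplitz matrix T_n(b − 1) satisfies ‖T_n(b − 1)‖₂ ≤ √n · (e^{A₁/√n} − 1)². -/

import Mathlib

open Filter Complex MeasureTheory Topology
open scoped ComplexOrder

noncomputable def fc (h : ℝ → ℂ) (m : ℤ) : ℂ :=
  (1 / (2 * Real.pi) : ℂ) * ∫ θ in (-Real.pi)..Real.pi, h θ * Complex.exp (-Complex.I * m * θ)

noncomputable def Tmat (n : ℕ) (h : ℝ → ℂ) : Matrix (Fin n) (Fin n) ℂ :=
  Matrix.of fun j l => fc h ((j : ℤ) - (l : ℤ))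

noncomputable def g1 (α : ℤ → ℂ) (k : ℕ → ℕ+ → ℕ) (n : ℕ) (θ : ℝ) : ℂ :=
  ∑' j : ℕ+, if k n j ≤ n then
      (α ((j : ℕ) : ℤ) * Complex.exp (Complex.I * (k n j : ℂ) * (θ : ℂ))
        + α (-((j : ℕ) : ℤ)) * Complex.exp (-Complex.I * (k n j : ℂ) * (θ : ℂ))) /
      (Real.sqrt (k n j) : ℂ)
    else 0

noncomputable def g2 (α : ℤ → ℂ) (k : ℕ → ℕ+ → ℕ) (n : ℕ) (θ : ℝ) : ℂ :=
  ∑' j : ℕ+, if n < k n j then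
      (α ((j : ℕ) : ℤ) * Complex.exp (Complex.I * (k n j : ℂ) * (θ : ℂ))
        + α (-((j : ℕ) : ℤ)) * Complex.exp (-Complex.I * (k n j : ℂ) * (θ : ℂ))) /
      (Real.sqrt n : ℂ)
    else 0

noncomputable def g1p (α : ℤ → ℂ) (k : ℕ → ℕ+ → ℕ) (n : ℕ) (θ : ℝ) : ℂ :=
  ∑' j : ℕ+, if k n j ≤ n then
      α ((j : ℕ) : ℤ) * Complex.exp (Complex.I * (k n j : ℂ) * (θ : ℂ)) / (Real.sqrt (k n j) : ℂ)
    else 0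

noncomputable def g1m (α : ℤ → ℂ) (k : ℕ → ℕ+ → ℕ) (n : ℕ) (θ : ℝ) : ℂ :=
  ∑' j : ℕ+, if k n j ≤ n then
      α (-((j : ℕ) : ℤ)) * Complex.exp (-Complex.I * (k n j : ℂ) * (θ : ℂ)) / (Real.sqrt (k n j) : ℂ)
    else 0

noncomputable def C1 (α : ℤ → ℂ) (k : ℕ → ℕ+ → ℕ) (n : ℕ) : ℂ :=
  ∑' j : ℕ+, if k n j ≤ n then α ((j : ℕ) : ℤ) * α (-((j : ℕ) : ℤ)) else 0

noncomputable def C2 (α : ℤ → ℂ) (k : ℕ → ℕ+ → ℕ) (n : ℕ) : ℂ :=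
  ∑' j : ℕ+, if n < k n j then α ((j : ℕ) : ℤ) * α (-((j : ℕ) : ℤ)) else 0

noncomputable def A1 (α : ℤ → ℂ) : ℝ :=
  ∑' j : ℕ+, (‖α ((j : ℕ) : ℤ)‖ + ‖α (-((j : ℕ) : ℤ))‖)

/-- Finite section `P_n H(c) H(d̃) P_n` of the product of Hankel matrices. -/
noncomputable def Mmat (n : ℕ) (c d : ℝ → ℂ) : Matrix (Fin n) (Fin n) ℂ :=
  Matrix.of fun j l => ∑' kk : ℕ, fc c ((j : ℤ) + kk + 1) * fc d (-((kk : ℤ) + (l : ℤ) + 1))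

/-- Finite section `W_n H(c̃) H(d) W_n` of the product of Hankel matrices. -/
noncomputable def Mpmat (n : ℕ) (c d : ℝ → ℂ) : Matrix (Fin n) (Fin n) ℂ :=
  Matrix.of fun j l => ∑' kk : ℕ, fc c (-((n : ℤ) - (j : ℤ) + kk)) * fc d ((kk : ℤ) + (n : ℤ) - (l : ℤ))

noncomputable def Bmat (α : ℤ → ℂ) (k : ℕ → ℕ+ → ℕ) (n : ℕ) : Matrix (Fin n) (Fin n) ℂ :=
  Tmat n (fun θ => Complex.exp (-(g1 α k n θ)))
    - Mmat n (fun θ => Complex.exp (-(g1p α k n θ))) (fun θ => Complex.exp (-(g1m α k n θ)))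
    - Mpmat n (fun θ => Complex.exp (-(g1m α k n θ))) (fun θ => Complex.exp (-(g1p α k n θ)))

noncomputable def Fmat (α : ℤ → ℂ) (k : ℕ → ℕ+ → ℕ) (n : ℕ) : Matrix (Fin n) (Fin n) ℂ :=
  Mmat n (fun θ => Complex.exp (g1 α k n θ)) (fun θ => Complex.exp (g2 α k n θ))
    + Mpmat n (fun θ => Complex.exp (g1 α k n θ)) (fun θ => Complex.exp (g2 α k n θ))

noncomputable def Emat (α : ℤ → ℂ) (k : ℕ → ℕ+ → ℕ) (n : ℕ) : Matrix (Fin n) (Fin n) ℂ :=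
  - Mmat n (fun θ => Complex.exp (-(g1p α k n θ))) (fun θ => Complex.exp (-(g1m α k n θ)))
    - Mpmat n (fun θ => Complex.exp (-(g1m α k n θ))) (fun θ => Complex.exp (-(g1p α k n θ)))

/-- The trace norm (sum of singular values) of a complex square matrix. -/
noncomputable def traceNorm {n : ℕ} (M : Matrix (Fin n) (Fin n) ℂ) : ℝ :=
  (((Matrix.posSemidef_conjTranspose_mul_self M).1.eigenvectorUnitary.1 *
      Matrix.diagonal (((↑) : ℝ → ℂ) ∘ (Real.sqrt ·) ∘ (Matrix.posSemidef_conjTranspose_mul_self M).1.eigenvalues) *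
      (star (Matrix.posSemidef_conjTranspose_mul_self M).1.eigenvectorUnitary : Matrix (Fin n) (Fin n) ℂ)).trace).re

/-- The Frobenius (Hilbert-Schmidt) norm of a complex square matrix. -/
noncomputable def frobNorm {n : ℕ} (M : Matrix (Fin n) (Fin n) ℂ) : ℝ :=
  Real.sqrt (∑ j : Fin n, ∑ l : Fin n, ‖M j l‖ ^ 2)


open scoped Nat

section AuxStmt10

instance fact_two_pi_pos : Fact (0 < 2 * Real.pi) := ⟨by positivity⟩

lemma ineq1 (x : ℝ) (hx : 0 ≤ x) : Real.exp x - 1 - x ≤ (Real.exp x - 1) ^ 2 := by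
  have h1 := Real.add_one_le_exp x
  have h2 := Real.add_one_le_exp (-x)
  have h3 := Real.exp_pos x
  have h4 : Real.exp (-x) * Real.exp x = 1 := by rw [← Real.exp_add]; simp
  nlinarith [sq_nonneg (Real.exp x - 1), sq_nonneg (Real.exp x - 1 - x)]

lemma ineq2 {y x : ℝ} (hy : 0 ≤ y) (hxy : y ≤ x) :
    Real.exp y - 1 - y ≤ Real.exp x - 1 - x := by
  have h1 : Real.exp (x - y) * Real.exp y = Real.exp x := by rw [← Real.exp_add]; ring_nf
  have h2 := Real.add_one_le_exp (x - y)
  have h3 := Real.one_le_exp hy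
  nlinarith

set_option maxHeartbeats 1000000 in
lemma exp_tail_bound (z : ℂ) : ‖Complex.exp z - 1 - z‖ ≤ Real.exp ‖z‖ - 1 - ‖z‖ := by
  have hsC : Summable fun n : ℕ => z ^ n / n ! := NormedSpace.expSeries_div_summable z
  have hsR : Summable fun n : ℕ => ‖z‖ ^ n / n ! := NormedSpace.expSeries_div_summable ‖z‖
  have hC : Complex.exp z = ∑' n : ℕ, z ^ n / n ! := by
    rw [Complex.exp_eq_exp_ℂ, NormedSpace.exp_eq_tsum_div]
  have hR : Real.exp ‖z‖ = ∑' n : ℕ, ‖z‖ ^ n / n ! := by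
    rw [Real.exp_eq_exp_ℝ, NormedSpace.exp_eq_tsum_div]
  have hC2 : Complex.exp z - 1 - z = ∑' n : ℕ, z ^ (n + 2) / (n + 2)! := by
    rw [hC, Summable.tsum_eq_zero_add hsC,
      Summable.tsum_eq_zero_add (f := fun b : ℕ => z ^ (b + 1) / (b + 1)!) ((summable_nat_add_iff 1).2 hsC)]
    simp
  have hR2 : Real.exp ‖z‖ - 1 - ‖z‖ = ∑' n : ℕ, ‖z‖ ^ (n + 2) / (n + 2)! := by
    rw [hR, Summable.tsum_eq_zero_add hsR,
      Summable.tsum_eq_zero_add (f := fun b : ℕ => ‖z‖ ^ (b + 1) / (b + 1)!) ((summable_nat_add_iff 1).2 hsR)]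
    simp
  rw [hC2, hR2]
  refine (norm_tsum_le_tsum_norm ?_).trans_eq ?_
  · simpa [norm_div, norm_pow] using (summable_nat_add_iff 2).2 hsR
  · congr 1; ext n; simp [norm_div, norm_pow]

noncomputable def g2t (α : ℤ → ℂ) (k : ℕ → ℕ+ → ℕ) (n : ℕ) (θ : ℝ) (j : ℕ+) : ℂ :=
  if n < k n j then
      (α ((j : ℕ) : ℤ) * Complex.exp (Complex.I * (k n j : ℂ) * (θ : ℂ))
        + α (-((j : ℕ) : ℤ)) * Complex.exp (-Complex.I * (k n j : ℂ) * (θ : ℂ))) /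
      (Real.sqrt n : ℂ)
    else 0

lemma g2_eq (α : ℤ → ℂ) (k : ℕ → ℕ+ → ℕ) (n : ℕ) (θ : ℝ) :
    g2 α k n θ = ∑' j : ℕ+, g2t α k n θ j := rfl

lemma norm_exp_I_mul (K : ℂ) (θ : ℝ) (hK : K.im = 0) : ‖Complex.exp (Complex.I * K * θ)‖ = 1 := by
  rw [Complex.norm_exp]
  have : (Complex.I * K * θ).re = 0 := by
    simp [Complex.mul_re, Complex.mul_im, hK]
  rw [this, Real.exp_zero]

lemma norm_exp_neg_I_mul (K : ℂ) (θ : ℝ) (hK : K.im = 0) :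
    ‖Complex.exp (-Complex.I * K * θ)‖ = 1 := by
  rw [Complex.norm_exp]
  have : (-Complex.I * K * θ).re = 0 := by
    simp [Complex.mul_re, Complex.mul_im, hK]
  rw [this, Real.exp_zero]

lemma g2t_norm_le (α : ℤ → ℂ) (k : ℕ → ℕ+ → ℕ) (n : ℕ) (θ : ℝ) (j : ℕ+) :
    ‖g2t α k n θ j‖ ≤ (‖α ((j : ℕ) : ℤ)‖ + ‖α (-((j : ℕ) : ℤ))‖) / Real.sqrt n := by
  unfold g2t
  split_ifs with h
  · rw [norm_div]
    have h1 : ‖(Real.sqrt n : ℂ)‖ = Real.sqrt n := by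
      simp [Complex.norm_real, Real.sqrt_nonneg]
    rw [h1]
    rcases eq_or_lt_of_le (Real.sqrt_nonneg (n:ℝ)) with hs | hs
    · simp [← hs]
    · gcongr
      calc ‖α ((j : ℕ) : ℤ) * Complex.exp (Complex.I * (k n j : ℂ) * (θ : ℂ))
            + α (-((j : ℕ) : ℤ)) * Complex.exp (-Complex.I * (k n j : ℂ) * (θ : ℂ))‖
          ≤ ‖α ((j : ℕ) : ℤ) * Complex.exp (Complex.I * (k n j : ℂ) * (θ : ℂ))‖
            + ‖α (-((j : ℕ) : ℤ)) * Complex.exp (-Complex.I * (k n j : ℂ) * (θ : ℂ))‖ :=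
            norm_add_le _ _
        _ = ‖α ((j : ℕ) : ℤ)‖ + ‖α (-((j : ℕ) : ℤ))‖ := by
            rw [norm_mul, norm_mul, norm_exp_I_mul _ _ (by simp), norm_exp_neg_I_mul _ _ (by simp)]
            ring
  · simp
    positivity

lemma g2t_summable_norm (α : ℤ → ℂ) (k : ℕ → ℕ+ → ℕ) (n : ℕ)
    (hsum : Summable (fun j : ℕ+ => ‖α ((j : ℕ) : ℤ)‖ + ‖α (-((j : ℕ) : ℤ))‖)) (θ : ℝ) :
    Summable fun j : ℕ+ => ‖g2t α k n θ j‖ :=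
  Summable.of_nonneg_of_le (fun _ => norm_nonneg _) (fun j => g2t_norm_le α k n θ j)
    (hsum.div_const _)

lemma g2_norm_le (α : ℤ → ℂ) (k : ℕ → ℕ+ → ℕ) (n : ℕ)
    (hsum : Summable (fun j : ℕ+ => ‖α ((j : ℕ) : ℤ)‖ + ‖α (-((j : ℕ) : ℤ))‖)) (θ : ℝ) :
    ‖g2 α k n θ‖ ≤ A1 α / Real.sqrt n := by
  rw [g2_eq]
  refine (norm_tsum_le_tsum_norm (g2t_summable_norm α k n hsum θ)).trans ?_
  rw [A1, ← tsum_div_const]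
  exact Summable.tsum_le_tsum (fun j => g2t_norm_le α k n θ j) (g2t_summable_norm α k n hsum θ)
    (hsum.div_const _)

lemma g2_continuous (α : ℤ → ℂ) (k : ℕ → ℕ+ → ℕ) (n : ℕ)
    (hsum : Summable (fun j : ℕ+ => ‖α ((j : ℕ) : ℤ)‖ + ‖α (-((j : ℕ) : ℤ))‖)) :
    Continuous (g2 α k n) := by
  have : (g2 α k n) = fun θ => ∑' j : ℕ+, g2t α k n θ j := rfl
  rw [this]
  apply continuous_tsum
    (u := fun j : ℕ+ => (‖α ((j : ℕ) : ℤ)‖ + ‖α (-((j : ℕ) : ℤ))‖) / Real.sqrt n)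
  · intro j
    unfold g2t
    split_ifs with h
    · fun_prop
    · exact continuous_const
  · exact hsum.div_const _
  · intro j θ
    exact g2t_norm_le α k n θ j

lemma g2_periodic (α : ℤ → ℂ) (k : ℕ → ℕ+ → ℕ) (n : ℕ) :
    Function.Periodic (g2 α k n) (2 * Real.pi) := by
  intro θ
  rw [g2_eq, g2_eq]
  apply tsum_congr
  intro j
  unfold g2t
  split_ifs with h
  · have e1 : Complex.I * (k n j : ℂ) * ((θ + 2 * Real.pi : ℝ) : ℂ)
        = Complex.I * (k n j : ℂ) * (θ : ℂ) + ((k n j : ℕ) : ℤ) * (2 * Real.pi * Complex.I) := by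
      push_cast; ring
    have e2 : -Complex.I * (k n j : ℂ) * ((θ + 2 * Real.pi : ℝ) : ℂ)
        = -Complex.I * (k n j : ℂ) * (θ : ℂ)
          + (-((k n j : ℕ) : ℤ) : ℤ) * (2 * Real.pi * Complex.I) := by
      push_cast; ring
    rw [e1, e2, Complex.exp_add, Complex.exp_add, Complex.exp_int_mul_two_pi_mul_I,
      Complex.exp_int_mul_two_pi_mul_I, mul_one, mul_one]
  · rfl

lemma integral_exp_int_ne (c : ℤ) (hc : c ≠ 0) :
    ∫ θ in (-Real.pi)..Real.pi, Complex.exp (Complex.I * c * θ) = 0 := by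
  have hc' : (Complex.I * (c : ℂ)) ≠ 0 := by
    apply mul_ne_zero Complex.I_ne_zero
    exact_mod_cast hc
  have h1 : ∀ θ : ℝ, Complex.exp (Complex.I * c * θ) = Complex.exp ((Complex.I * c) * θ) := by
    intro θ; ring_nf
  have h2 := _root_.integral_exp_mul_complex (a := (-Real.pi)) (b := Real.pi) hc'
  simp only [h1, h2]
  have h3 : Complex.I * c * (Real.pi : ℂ)
      = Complex.I * c * ((-Real.pi : ℝ) : ℂ) + c * (2 * Real.pi * Complex.I) := by
    push_cast; ring
  rw [h3, Complex.exp_add, Complex.exp_int_mul_two_pi_mul_I, mul_one, sub_self, zero_div]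

lemma integral_g2t (α : ℤ → ℂ) (k : ℕ → ℕ+ → ℕ) (n : ℕ) (m : ℤ) (hm : m.natAbs ≤ n) (j : ℕ+) :
    ∫ θ in (-Real.pi)..Real.pi, g2t α k n θ j * Complex.exp (-Complex.I * m * θ) = 0 := by
  unfold g2t
  split_ifs with h
  · have key : ∀ θ : ℝ,
        (α ((j : ℕ) : ℤ) * Complex.exp (Complex.I * (k n j : ℂ) * (θ : ℂ))
          + α (-((j : ℕ) : ℤ)) * Complex.exp (-Complex.I * (k n j : ℂ) * (θ : ℂ))) /
          (Real.sqrt n : ℂ) * Complex.exp (-Complex.I * m * θ)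
        = (α ((j : ℕ) : ℤ) / (Real.sqrt n : ℂ))
            * Complex.exp (Complex.I * (((k n j : ℤ) - m : ℤ) : ℂ) * θ)
          + (α (-((j : ℕ) : ℤ)) / (Real.sqrt n : ℂ))
            * Complex.exp (Complex.I * ((-(k n j : ℤ) - m : ℤ) : ℂ) * θ) := by
      intro θ
      have e1 : Complex.I * ((((k n j : ℤ) - m : ℤ)) : ℂ) * θ
          = Complex.I * (k n j : ℂ) * θ + -Complex.I * m * θ := by push_cast; ring
      have e2 : Complex.I * (((-(k n j : ℤ) - m : ℤ)) : ℂ) * θ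
          = -Complex.I * (k n j : ℂ) * θ + -Complex.I * m * θ := by push_cast; ring
      rw [e1, e2, Complex.exp_add, Complex.exp_add]
      ring
    simp_rw [key]
    rw [intervalIntegral.integral_add, intervalIntegral.integral_const_mul,
      intervalIntegral.integral_const_mul,
      integral_exp_int_ne _ (by omega : (k n j : ℤ) - m ≠ 0),
      integral_exp_int_ne _ (by omega : -(k n j : ℤ) - m ≠ 0)]
    · ring
    · apply Continuous.intervalIntegrable; fun_prop
    · apply Continuous.intervalIntegrable; fun_prop
  · simp

lemma fc_g2_zero (α : ℤ → ℂ) (k : ℕ → ℕ+ → ℕ) (n : ℕ)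
    (hsum : Summable (fun j : ℕ+ => ‖α ((j : ℕ) : ℤ)‖ + ‖α (-((j : ℕ) : ℤ))‖))
    (m : ℤ) (hm : m.natAbs ≤ n) : fc (g2 α k n) m = 0 := by
  have hFcont : ∀ j : ℕ+,
      Continuous fun θ : ℝ => g2t α k n θ j * Complex.exp (-Complex.I * m * θ) := by
    intro j
    apply Continuous.mul ?_ (by fun_prop)
    unfold g2t
    split_ifs with h
    · fun_prop
    · exact continuous_const
  set F : ℕ+ → C(ℝ, ℂ) :=
    fun j => ⟨fun θ => g2t α k n θ j * Complex.exp (-Complex.I * m * θ), hFcont j⟩ with hF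
  have hnorm : ∀ (j : ℕ+) (θ : ℝ),
      ‖F j θ‖ ≤ (‖α ((j : ℕ) : ℤ)‖ + ‖α (-((j : ℕ) : ℤ))‖) / Real.sqrt n := by
    intro j θ
    show ‖g2t α k n θ j * Complex.exp (-Complex.I * m * θ)‖ ≤ _
    rw [norm_mul, norm_exp_neg_I_mul (m : ℂ) θ (by simp), mul_one]
    exact g2t_norm_le α k n θ j
  have hFs : Summable fun j : ℕ+ =>
      ‖(F j).restrict (⟨Set.uIcc (-Real.pi) Real.pi, isCompact_uIcc⟩ :
        TopologicalSpace.Compacts ℝ)‖ := by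
    apply Summable.of_nonneg_of_le (fun j => norm_nonneg _) ?_ (hsum.div_const (Real.sqrt n))
    intro j
    rw [ContinuousMap.norm_le _ (by positivity)]
    intro θ
    exact hnorm j θ
  have hswap := intervalIntegral.tsum_intervalIntegral_eq_of_summable_norm
    (a := -Real.pi) (b := Real.pi) hFs
  unfold fc
  have h0 : Set.EqOn (fun θ : ℝ => g2 α k n θ * Complex.exp (-Complex.I * m * θ))
      (fun θ : ℝ => ∑' j : ℕ+, F j θ) (Set.uIcc (-Real.pi) Real.pi) := by
    intro θ _
    show g2 α k n θ * Complex.exp (-Complex.I * m * θ) = ∑' j : ℕ+, F j θ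
    rw [g2_eq]
    exact (tsum_mul_right).symm
  rw [intervalIntegral.integral_congr h0, ← hswap]
  have hz : ∀ j : ℕ+, ∫ θ in (-Real.pi)..Real.pi, F j θ = 0 := fun j =>
    integral_g2t α k n m hm j
  rw [tsum_congr hz, tsum_zero, mul_zero]

lemma lift_continuous {h : ℝ → ℂ} (hp : Function.Periodic h (2 * Real.pi))
    (hc : Continuous h) : Continuous hp.lift := by
  rw [(QuotientAddGroup.isQuotientMap_mk _).continuous_iff]
  exact hc

lemma fc_eq_fourierCoeff {h : ℝ → ℂ} (hp : Function.Periodic h (2 * Real.pi))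
    (hc : Continuous h) (m : ℤ) :
    fc h m = fourierCoeff (hp.lift : AddCircle (2 * Real.pi) → ℂ) m := by
  rw [fourierCoeff_eq_intervalIntegral _ m (-Real.pi)]
  have hπ : -Real.pi + 2 * Real.pi = Real.pi := by ring
  rw [hπ]
  rw [fc]
  have key : ∀ θ : ℝ,
      (fourier (-m) (θ : AddCircle (2 * Real.pi)) : ℂ) • hp.lift (θ : AddCircle (2 * Real.pi))
      = h θ * Complex.exp (-Complex.I * m * θ) := by
    intro θ
    rw [hp.lift_coe, fourier_coe_apply, smul_eq_mul, mul_comm]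
    congr 1
    congr 1
    have hπ0 : (Real.pi : ℂ) ≠ 0 := by exact_mod_cast Real.pi_ne_zero
    field_simp
    push_cast
    ring
  simp_rw [key]
  rw [Complex.real_smul]
  congr 1
  push_cast
  ring

open AddCircle in
lemma bessel (G : C(AddCircle (2 * Real.pi), ℂ)) (B : ℝ) (hB : ∀ x, ‖G x‖ ≤ B)
    (s : Finset ℤ) :
    ∑ i ∈ s, ‖fourierCoeff (⇑G) i‖ ^ 2 ≤ B ^ 2 := by
  set fLp := ContinuousMap.toLp (E := ℂ) 2 haarAddCircle ℂ G with hfLp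
  have h1 : ∀ i : ℤ, fourierCoeff (⇑G) i = fourierCoeff (⇑fLp) i := fun i =>
    (fourierCoeff_toLp G i).symm
  have hBnn : 0 ≤ B := le_trans (norm_nonneg _) (hB (0 : AddCircle (2 * Real.pi)))
  have hsummable : Summable fun i : ℤ => ‖fourierCoeff (⇑fLp) i‖ ^ 2 := by
    have := (lp.memℓp (fourierBasis.repr fLp)).summable
      (by norm_num : (0 : ℝ) < (2 : ENNReal).toReal)
    simp only [fourierBasis_repr] at this
    simpa using this
  have hpars := tsum_sq_fourierCoeff fLp
  have hae : ⇑fLp =ᵐ[haarAddCircle] ⇑G := ContinuousMap.coeFn_toLp haarAddCircle G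
  have hint : ∫ t : AddCircle (2 * Real.pi), ‖fLp t‖ ^ 2 ∂haarAddCircle ≤ B ^ 2 := by
    have heq : ∫ t : AddCircle (2 * Real.pi), ‖fLp t‖ ^ 2 ∂haarAddCircle
        = ∫ t : AddCircle (2 * Real.pi), ‖G t‖ ^ 2 ∂haarAddCircle := by
      apply integral_congr_ae
      filter_upwards [hae] with t ht
      rw [ht]
    rw [heq]
    have hGint : Integrable (fun t : AddCircle (2 * Real.pi) => ‖G t‖ ^ 2) haarAddCircle := by
      apply Continuous.integrable_of_hasCompactSupport
      · fun_prop
      · exact HasCompactSupport.of_compactSpace _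
    calc ∫ t, ‖G t‖ ^ 2 ∂haarAddCircle
        ≤ ∫ _t : AddCircle (2 * Real.pi), B ^ 2 ∂haarAddCircle := by
          apply integral_mono hGint (integrable_const _)
          intro t
          exact pow_le_pow_left₀ (norm_nonneg _) (hB t) 2
      _ = B ^ 2 := by simp
  calc ∑ i ∈ s, ‖fourierCoeff (⇑G) i‖ ^ 2 = ∑ i ∈ s, ‖fourierCoeff (⇑fLp) i‖ ^ 2 := by
        simp_rw [h1]
    _ ≤ ∑' i : ℤ, ‖fourierCoeff (⇑fLp) i‖ ^ 2 :=
        Summable.sum_le_tsum s (fun i _ => by positivity) hsummable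
    _ ≤ B ^ 2 := hpars.le.trans hint

end AuxStmt10

theorem stmt10 (α : ℤ → ℂ) (k : ℕ → ℕ+ → ℕ)
    (hpos : ∀ n j, 0 < k n j) (hinj : ∀ n, Function.Injective (k n))
    (hsum : Summable (fun j : ℕ+ => ‖α ((j : ℕ) : ℤ)‖ + ‖α (-((j : ℕ) : ℤ))‖)) :
    ∀ n : ℕ, 0 < n →
      frobNorm (Tmat n (fun θ => Complex.exp (g2 α k n θ) - 1)) ≤
        Real.sqrt n * (Real.exp (A1 α / Real.sqrt n) - 1) ^ 2 := by
  intro n hn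
  have hsqrtpos : 0 < Real.sqrt n := Real.sqrt_pos.mpr (by exact_mod_cast hn)
  have hA1 : 0 ≤ A1 α := tsum_nonneg (fun j => by positivity)
  set x := A1 α / Real.sqrt n with hx
  have hxnn : 0 ≤ x := by positivity
  set B := Real.exp x - 1 - x with hB
  have hBnn : 0 ≤ B := by
    have := Real.add_one_le_exp x
    simp only [hB]
    linarith
  set f : ℝ → ℂ := fun θ => Complex.exp (g2 α k n θ) - 1 - g2 α k n θ with hf
  have hg2c := g2_continuous α k n hsum
  have hfc : Continuous f := by fun_prop
  have hfp : Function.Periodic f (2 * Real.pi) := by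
    intro θ
    simp only [hf, g2_periodic α k n θ]
  set G : C(AddCircle (2 * Real.pi), ℂ) := ⟨hfp.lift, lift_continuous hfp hfc⟩ with hG
  have hGB : ∀ y, ‖G y‖ ≤ B := by
    intro y
    induction y using QuotientAddGroup.induction_on with
    | H θ =>
      show ‖hfp.lift θ‖ ≤ B
      rw [hfp.lift_coe]
      calc ‖f θ‖ ≤ Real.exp ‖g2 α k n θ‖ - 1 - ‖g2 α k n θ‖ := exp_tail_bound _
        _ ≤ B := ineq2 (norm_nonneg _) (g2_norm_le α k n hsum θ)
  have hentry : ∀ m : ℤ, m.natAbs ≤ n →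
      fc (fun θ => Complex.exp (g2 α k n θ) - 1) m = fourierCoeff (⇑G) m := by
    intro m hm
    have hint1 : IntervalIntegrable (fun θ : ℝ => g2 α k n θ * Complex.exp (-Complex.I * m * θ))
        MeasureTheory.volume (-Real.pi) Real.pi := by
      apply Continuous.intervalIntegrable; fun_prop
    have hint2 : IntervalIntegrable (fun θ : ℝ => f θ * Complex.exp (-Complex.I * m * θ))
        MeasureTheory.volume (-Real.pi) Real.pi := by
      apply Continuous.intervalIntegrable; fun_prop
    have hadd : fc (fun θ => Complex.exp (g2 α k n θ) - 1) m = fc (g2 α k n) m + fc f m := by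
      unfold fc
      rw [← mul_add, ← intervalIntegral.integral_add hint1 hint2]
      congr 1
      apply intervalIntegral.integral_congr
      intro θ _
      simp only [hf]
      ring
    rw [hadd, fc_g2_zero α k n hsum m hm, zero_add, fc_eq_fourierCoeff hfp hfc m]
    rfl
  have hrow : ∀ j : Fin n,
      ∑ l : Fin n, ‖(Tmat n (fun θ => Complex.exp (g2 α k n θ) - 1)) j l‖ ^ 2 ≤ B ^ 2 := by
    intro j
    have hInj : ∀ a ∈ Finset.univ, ∀ b ∈ Finset.univ,
        (fun l : Fin n => (j : ℤ) - (l : ℤ)) a = (fun l : Fin n => (j : ℤ) - (l : ℤ)) b →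
        a = b := by
      intro a _ b _ hab
      simp only [sub_right_inj] at hab
      exact Fin.ext (by exact_mod_cast hab)
    calc ∑ l : Fin n, ‖(Tmat n (fun θ => Complex.exp (g2 α k n θ) - 1)) j l‖ ^ 2
        = ∑ i ∈ Finset.univ.image (fun l : Fin n => (j : ℤ) - (l : ℤ)),
            ‖fourierCoeff (⇑G) i‖ ^ 2 := by
          rw [Finset.sum_image hInj]
          apply Finset.sum_congr rfl
          intro l _
          have he : (Tmat n (fun θ => Complex.exp (g2 α k n θ) - 1)) j l
              = fc (fun θ => Complex.exp (g2 α k n θ) - 1) ((j : ℤ) - (l : ℤ)) := rfl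
          rw [he, hentry _ (by have := j.isLt; have := l.isLt; omega)]
      _ ≤ B ^ 2 := bessel G B hGB _
  have htotal : ∑ j : Fin n, ∑ l : Fin n,
      ‖(Tmat n (fun θ => Complex.exp (g2 α k n θ) - 1)) j l‖ ^ 2 ≤ (n : ℝ) * B ^ 2 := by
    calc ∑ j : Fin n, ∑ l : Fin n,
          ‖(Tmat n (fun θ => Complex.exp (g2 α k n θ) - 1)) j l‖ ^ 2
        ≤ ∑ _j : Fin n, B ^ 2 := Finset.sum_le_sum (fun j _ => hrow j)
      _ = (n : ℝ) * B ^ 2 := by simp [Finset.sum_const, nsmul_eq_mul]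
  have hTeq : Tmat n (fun θ => Complex.exp (g2 α k n θ) - 1)
      = Tmat n (fun θ => Complex.exp (g2 α k n θ) - 1) := rfl
  unfold frobNorm
  calc Real.sqrt (∑ j : Fin n, ∑ l : Fin n,
          ‖(Tmat n (fun θ => Complex.exp (g2 α k n θ) - 1)) j l‖ ^ 2)
      ≤ Real.sqrt ((n : ℝ) * B ^ 2) := Real.sqrt_le_sqrt htotal
    _ = Real.sqrt n * B := by
        rw [Real.sqrt_mul (by positivity), Real.sqrt_sq hBnn]
    _ ≤ Real.sqrt n * (Real.exp x - 1) ^ 2 := by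
        apply mul_le_mul_of_nonneg_left _ (Real.sqrt_nonneg _)
        rw [hB]
        exact ineq1 x hxnn
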